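/- arXiv:2111.01588 — 4 statements merged into one kernel-verified Lean document; each statement's English description precedes it below -/
import Mathlib

section
/- For U = (u0,...,u4) ∈ ℂ^5 and M_i(U) = (-1)^i d_i n_i, where d_i is the product of differences (u_j - u_k) over j > k with j, k ≠ i, and n_i = e_2(i)^2 - e_1(i) e_3(i) with e_m(i) the m-th elementary symmetric polynomial in the variables u_j for j ≠ i, the vector (M_0(U),...,M_4(U)) satisfies the four linear equations Σ_i M_i(U) = 0, Σ_i M_i(U) u_i = 0, Σ_i M_i(U) u_i^4 = 0, Σ_i M_i(U) u_i^5 = 0. -/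
set_option maxRecDepth 100000
set_option maxHeartbeats 2000000

/-- Elementary symmetric polynomial of degree `m` of the values of `u` on a finite set. -/
noncomputable def esym5 (u : Fin 5 → ℂ) (s : Finset (Fin 5)) (m : ℕ) : ℂ :=
  ∑ t ∈ s.powersetCard m, ∏ j ∈ t, u j

/-- `d_i = ∏_{j>k, j,k≠i} (u_j - u_k)`. -/
noncomputable def dpart (u : Fin 5 → ℂ) (i : Fin 5) : ℂ :=
  ∏ p ∈ Finset.univ.filter
      (fun p : Fin 5 × Fin 5 => p.2 < p.1 ∧ p.1 ≠ i ∧ p.2 ≠ i), (u p.1 - u p.2)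

/-- `n_i = e₂(i)² - e₁(i)e₃(i)`, with `e_m(i)` the elementary symmetric polynomials in
`{u_j : j ≠ i}`. -/
noncomputable def npart (u : Fin 5 → ℂ) (i : Fin 5) : ℂ :=
  (esym5 u {i}ᶜ 2)^2 - esym5 u {i}ᶜ 1 * esym5 u {i}ᶜ 3

/-- `M_i = (-1)^i d_i n_i`. -/
noncomputable def Mpart (u : Fin 5 → ℂ) (i : Fin 5) : ℂ :=
  (-1)^(i : ℕ) * dpart u i * npart u i

lemma dlem0 (u : Fin 5 → ℂ) : dpart u 0 = (u 2 - u 1)*(u 3 - u 1)*(u 3 - u 2)*(u 4 - u 1)*(u 4 - u 2)*(u 4 - u 3) := by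
  rw [dpart, show (Finset.univ.filter
      (fun p : Fin 5 × Fin 5 => p.2 < p.1 ∧ p.1 ≠ 0 ∧ p.2 ≠ 0)) =
      ({(2,1),(3,1),(3,2),(4,1),(4,2),(4,3)} : Finset (Fin 5 × Fin 5)) from by decide]
  simp (config := { decide := true }) only [Finset.prod_insert, Finset.prod_singleton,
    Finset.mem_insert, Finset.mem_singleton]
  ring

lemma elem0_1 (u : Fin 5 → ℂ) : esym5 u ({0}ᶜ) 1 = u 1 + u 2 + u 3 + u 4 := by
  rw [esym5, show (({0}ᶜ : Finset (Fin 5)).powersetCard 1) =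
    ({{1},{2},{3},{4}} : Finset (Finset (Fin 5))) from by decide]
  simp (config := { decide := true }) only [Finset.sum_insert, Finset.prod_insert,
    Finset.sum_singleton, Finset.prod_singleton, Finset.mem_insert, Finset.mem_singleton]
  ring

lemma elem0_2 (u : Fin 5 → ℂ) : esym5 u ({0}ᶜ) 2 = u 1*u 2 + u 1*u 3 + u 1*u 4 + u 2*u 3 + u 2*u 4 + u 3*u 4 := by
  rw [esym5, show (({0}ᶜ : Finset (Fin 5)).powersetCard 2) =
    ({{1,2},{1,3},{1,4},{2,3},{2,4},{3,4}} : Finset (Finset (Fin 5))) from by decide]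
  simp (config := { decide := true }) only [Finset.sum_insert, Finset.prod_insert,
    Finset.sum_singleton, Finset.prod_singleton, Finset.mem_insert, Finset.mem_singleton]
  ring

lemma elem0_3 (u : Fin 5 → ℂ) : esym5 u ({0}ᶜ) 3 = u 1*u 2*u 3 + u 1*u 2*u 4 + u 1*u 3*u 4 + u 2*u 3*u 4 := by
  rw [esym5, show (({0}ᶜ : Finset (Fin 5)).powersetCard 3) =
    ({{1,2,3},{1,2,4},{1,3,4},{2,3,4}} : Finset (Finset (Fin 5))) from by decide]
  simp (config := { decide := true }) only [Finset.sum_insert, Finset.prod_insert,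
    Finset.sum_singleton, Finset.prod_singleton, Finset.mem_insert, Finset.mem_singleton]
  ring

lemma Mlem0 (u : Fin 5 → ℂ) : Mpart u 0 =
    (-1)^(0:ℕ) * ((u 2 - u 1)*(u 3 - u 1)*(u 3 - u 2)*(u 4 - u 1)*(u 4 - u 2)*(u 4 - u 3)) * ((esym5 u ({0}ᶜ) 2)^2 - esym5 u ({0}ᶜ) 1 * esym5 u ({0}ᶜ) 3) := by
  rw [Mpart, npart, dlem0]; rfl

lemma dlem1 (u : Fin 5 → ℂ) : dpart u 1 = (u 2 - u 0)*(u 3 - u 0)*(u 3 - u 2)*(u 4 - u 0)*(u 4 - u 2)*(u 4 - u 3) := by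
  rw [dpart, show (Finset.univ.filter
      (fun p : Fin 5 × Fin 5 => p.2 < p.1 ∧ p.1 ≠ 1 ∧ p.2 ≠ 1)) =
      ({(2,0),(3,0),(3,2),(4,0),(4,2),(4,3)} : Finset (Fin 5 × Fin 5)) from by decide]
  simp (config := { decide := true }) only [Finset.prod_insert, Finset.prod_singleton,
    Finset.mem_insert, Finset.mem_singleton]
  ring

lemma elem1_1 (u : Fin 5 → ℂ) : esym5 u ({1}ᶜ) 1 = u 0 + u 2 + u 3 + u 4 := by
  rw [esym5, show (({1}ᶜ : Finset (Fin 5)).powersetCard 1) =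
    ({{0},{2},{3},{4}} : Finset (Finset (Fin 5))) from by decide]
  simp (config := { decide := true }) only [Finset.sum_insert, Finset.prod_insert,
    Finset.sum_singleton, Finset.prod_singleton, Finset.mem_insert, Finset.mem_singleton]
  ring

lemma elem1_2 (u : Fin 5 → ℂ) : esym5 u ({1}ᶜ) 2 = u 0*u 2 + u 0*u 3 + u 0*u 4 + u 2*u 3 + u 2*u 4 + u 3*u 4 := by
  rw [esym5, show (({1}ᶜ : Finset (Fin 5)).powersetCard 2) =
    ({{0,2},{0,3},{0,4},{2,3},{2,4},{3,4}} : Finset (Finset (Fin 5))) from by decide]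
  simp (config := { decide := true }) only [Finset.sum_insert, Finset.prod_insert,
    Finset.sum_singleton, Finset.prod_singleton, Finset.mem_insert, Finset.mem_singleton]
  ring

lemma elem1_3 (u : Fin 5 → ℂ) : esym5 u ({1}ᶜ) 3 = u 0*u 2*u 3 + u 0*u 2*u 4 + u 0*u 3*u 4 + u 2*u 3*u 4 := by
  rw [esym5, show (({1}ᶜ : Finset (Fin 5)).powersetCard 3) =
    ({{0,2,3},{0,2,4},{0,3,4},{2,3,4}} : Finset (Finset (Fin 5))) from by decide]
  simp (config := { decide := true }) only [Finset.sum_insert, Finset.prod_insert,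
    Finset.sum_singleton, Finset.prod_singleton, Finset.mem_insert, Finset.mem_singleton]
  ring

lemma Mlem1 (u : Fin 5 → ℂ) : Mpart u 1 =
    (-1)^(1:ℕ) * ((u 2 - u 0)*(u 3 - u 0)*(u 3 - u 2)*(u 4 - u 0)*(u 4 - u 2)*(u 4 - u 3)) * ((esym5 u ({1}ᶜ) 2)^2 - esym5 u ({1}ᶜ) 1 * esym5 u ({1}ᶜ) 3) := by
  rw [Mpart, npart, dlem1]; rfl

lemma dlem2 (u : Fin 5 → ℂ) : dpart u 2 = (u 1 - u 0)*(u 3 - u 0)*(u 3 - u 1)*(u 4 - u 0)*(u 4 - u 1)*(u 4 - u 3) := by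
  rw [dpart, show (Finset.univ.filter
      (fun p : Fin 5 × Fin 5 => p.2 < p.1 ∧ p.1 ≠ 2 ∧ p.2 ≠ 2)) =
      ({(1,0),(3,0),(3,1),(4,0),(4,1),(4,3)} : Finset (Fin 5 × Fin 5)) from by decide]
  simp (config := { decide := true }) only [Finset.prod_insert, Finset.prod_singleton,
    Finset.mem_insert, Finset.mem_singleton]
  ring

lemma elem2_1 (u : Fin 5 → ℂ) : esym5 u ({2}ᶜ) 1 = u 0 + u 1 + u 3 + u 4 := by
  rw [esym5, show (({2}ᶜ : Finset (Fin 5)).powersetCard 1) =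
    ({{0},{1},{3},{4}} : Finset (Finset (Fin 5))) from by decide]
  simp (config := { decide := true }) only [Finset.sum_insert, Finset.prod_insert,
    Finset.sum_singleton, Finset.prod_singleton, Finset.mem_insert, Finset.mem_singleton]
  ring

lemma elem2_2 (u : Fin 5 → ℂ) : esym5 u ({2}ᶜ) 2 = u 0*u 1 + u 0*u 3 + u 0*u 4 + u 1*u 3 + u 1*u 4 + u 3*u 4 := by
  rw [esym5, show (({2}ᶜ : Finset (Fin 5)).powersetCard 2) =
    ({{0,1},{0,3},{0,4},{1,3},{1,4},{3,4}} : Finset (Finset (Fin 5))) from by decide]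
  simp (config := { decide := true }) only [Finset.sum_insert, Finset.prod_insert,
    Finset.sum_singleton, Finset.prod_singleton, Finset.mem_insert, Finset.mem_singleton]
  ring

lemma elem2_3 (u : Fin 5 → ℂ) : esym5 u ({2}ᶜ) 3 = u 0*u 1*u 3 + u 0*u 1*u 4 + u 0*u 3*u 4 + u 1*u 3*u 4 := by
  rw [esym5, show (({2}ᶜ : Finset (Fin 5)).powersetCard 3) =
    ({{0,1,3},{0,1,4},{0,3,4},{1,3,4}} : Finset (Finset (Fin 5))) from by decide]
  simp (config := { decide := true }) only [Finset.sum_insert, Finset.prod_insert,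
    Finset.sum_singleton, Finset.prod_singleton, Finset.mem_insert, Finset.mem_singleton]
  ring

lemma Mlem2 (u : Fin 5 → ℂ) : Mpart u 2 =
    (-1)^(2:ℕ) * ((u 1 - u 0)*(u 3 - u 0)*(u 3 - u 1)*(u 4 - u 0)*(u 4 - u 1)*(u 4 - u 3)) * ((esym5 u ({2}ᶜ) 2)^2 - esym5 u ({2}ᶜ) 1 * esym5 u ({2}ᶜ) 3) := by
  rw [Mpart, npart, dlem2]; rfl

lemma dlem3 (u : Fin 5 → ℂ) : dpart u 3 = (u 1 - u 0)*(u 2 - u 0)*(u 2 - u 1)*(u 4 - u 0)*(u 4 - u 1)*(u 4 - u 2) := by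
  rw [dpart, show (Finset.univ.filter
      (fun p : Fin 5 × Fin 5 => p.2 < p.1 ∧ p.1 ≠ 3 ∧ p.2 ≠ 3)) =
      ({(1,0),(2,0),(2,1),(4,0),(4,1),(4,2)} : Finset (Fin 5 × Fin 5)) from by decide]
  simp (config := { decide := true }) only [Finset.prod_insert, Finset.prod_singleton,
    Finset.mem_insert, Finset.mem_singleton]
  ring

lemma elem3_1 (u : Fin 5 → ℂ) : esym5 u ({3}ᶜ) 1 = u 0 + u 1 + u 2 + u 4 := by
  rw [esym5, show (({3}ᶜ : Finset (Fin 5)).powersetCard 1) =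
    ({{0},{1},{2},{4}} : Finset (Finset (Fin 5))) from by decide]
  simp (config := { decide := true }) only [Finset.sum_insert, Finset.prod_insert,
    Finset.sum_singleton, Finset.prod_singleton, Finset.mem_insert, Finset.mem_singleton]
  ring

lemma elem3_2 (u : Fin 5 → ℂ) : esym5 u ({3}ᶜ) 2 = u 0*u 1 + u 0*u 2 + u 0*u 4 + u 1*u 2 + u 1*u 4 + u 2*u 4 := by
  rw [esym5, show (({3}ᶜ : Finset (Fin 5)).powersetCard 2) =
    ({{0,1},{0,2},{0,4},{1,2},{1,4},{2,4}} : Finset (Finset (Fin 5))) from by decide]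
  simp (config := { decide := true }) only [Finset.sum_insert, Finset.prod_insert,
    Finset.sum_singleton, Finset.prod_singleton, Finset.mem_insert, Finset.mem_singleton]
  ring

lemma elem3_3 (u : Fin 5 → ℂ) : esym5 u ({3}ᶜ) 3 = u 0*u 1*u 2 + u 0*u 1*u 4 + u 0*u 2*u 4 + u 1*u 2*u 4 := by
  rw [esym5, show (({3}ᶜ : Finset (Fin 5)).powersetCard 3) =
    ({{0,1,2},{0,1,4},{0,2,4},{1,2,4}} : Finset (Finset (Fin 5))) from by decide]
  simp (config := { decide := true }) only [Finset.sum_insert, Finset.prod_insert,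
    Finset.sum_singleton, Finset.prod_singleton, Finset.mem_insert, Finset.mem_singleton]
  ring

lemma Mlem3 (u : Fin 5 → ℂ) : Mpart u 3 =
    (-1)^(3:ℕ) * ((u 1 - u 0)*(u 2 - u 0)*(u 2 - u 1)*(u 4 - u 0)*(u 4 - u 1)*(u 4 - u 2)) * ((esym5 u ({3}ᶜ) 2)^2 - esym5 u ({3}ᶜ) 1 * esym5 u ({3}ᶜ) 3) := by
  rw [Mpart, npart, dlem3]; rfl

lemma dlem4 (u : Fin 5 → ℂ) : dpart u 4 = (u 1 - u 0)*(u 2 - u 0)*(u 2 - u 1)*(u 3 - u 0)*(u 3 - u 1)*(u 3 - u 2) := by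
  rw [dpart, show (Finset.univ.filter
      (fun p : Fin 5 × Fin 5 => p.2 < p.1 ∧ p.1 ≠ 4 ∧ p.2 ≠ 4)) =
      ({(1,0),(2,0),(2,1),(3,0),(3,1),(3,2)} : Finset (Fin 5 × Fin 5)) from by decide]
  simp (config := { decide := true }) only [Finset.prod_insert, Finset.prod_singleton,
    Finset.mem_insert, Finset.mem_singleton]
  ring

lemma elem4_1 (u : Fin 5 → ℂ) : esym5 u ({4}ᶜ) 1 = u 0 + u 1 + u 2 + u 3 := by
  rw [esym5, show (({4}ᶜ : Finset (Fin 5)).powersetCard 1) =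
    ({{0},{1},{2},{3}} : Finset (Finset (Fin 5))) from by decide]
  simp (config := { decide := true }) only [Finset.sum_insert, Finset.prod_insert,
    Finset.sum_singleton, Finset.prod_singleton, Finset.mem_insert, Finset.mem_singleton]
  ring

lemma elem4_2 (u : Fin 5 → ℂ) : esym5 u ({4}ᶜ) 2 = u 0*u 1 + u 0*u 2 + u 0*u 3 + u 1*u 2 + u 1*u 3 + u 2*u 3 := by
  rw [esym5, show (({4}ᶜ : Finset (Fin 5)).powersetCard 2) =
    ({{0,1},{0,2},{0,3},{1,2},{1,3},{2,3}} : Finset (Finset (Fin 5))) from by decide]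
  simp (config := { decide := true }) only [Finset.sum_insert, Finset.prod_insert,
    Finset.sum_singleton, Finset.prod_singleton, Finset.mem_insert, Finset.mem_singleton]
  ring

lemma elem4_3 (u : Fin 5 → ℂ) : esym5 u ({4}ᶜ) 3 = u 0*u 1*u 2 + u 0*u 1*u 3 + u 0*u 2*u 3 + u 1*u 2*u 3 := by
  rw [esym5, show (({4}ᶜ : Finset (Fin 5)).powersetCard 3) =
    ({{0,1,2},{0,1,3},{0,2,3},{1,2,3}} : Finset (Finset (Fin 5))) from by decide]
  simp (config := { decide := true }) only [Finset.sum_insert, Finset.prod_insert,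
    Finset.sum_singleton, Finset.prod_singleton, Finset.mem_insert, Finset.mem_singleton]
  ring

lemma Mlem4 (u : Fin 5 → ℂ) : Mpart u 4 =
    (-1)^(4:ℕ) * ((u 1 - u 0)*(u 2 - u 0)*(u 2 - u 1)*(u 3 - u 0)*(u 3 - u 1)*(u 3 - u 2)) * ((esym5 u ({4}ᶜ) 2)^2 - esym5 u ({4}ᶜ) 1 * esym5 u ({4}ᶜ) 3) := by
  rw [Mpart, npart, dlem4]; rfl

/-- The vector `(M₀(U),…,M₄(U))` satisfies the four linear equations
`Σ M_i u_i^m = 0` for `m ∈ {0,1,4,5}`. -/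
theorem Mpart_linear_relations (u : Fin 5 → ℂ) :
    (∑ i, Mpart u i = 0) ∧ (∑ i, Mpart u i * u i = 0) ∧
    (∑ i, Mpart u i * (u i)^4 = 0) ∧ (∑ i, Mpart u i * (u i)^5 = 0) := by
  refine ⟨?_, ?_, ?_, ?_⟩ <;>
  · rw [Fin.sum_univ_five, Mlem0, Mlem1, Mlem2, Mlem3, Mlem4,
      elem0_1, elem0_2, elem0_3, elem1_1, elem1_2, elem1_3, elem2_1, elem2_2, elem2_3,
      elem3_1, elem3_2, elem3_3, elem4_1, elem4_2, elem4_3]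
    ring
end

section
/- For any (u0,...,u4) ∈ ℂ^5 with u_j = u_k for some j ≠ k, and any m, n ≥ 0, the sum T_{mn}(U) = Σ_{i=0}^4 M_i(U) u_i^m l_i(U)^n vanishes whenever l is a symmetric-compatible assignment with l_j = l_k when u_j = u_k; in particular, T_{mn}(U) is divisible by the discriminant δ(U) = ∏_{j>k}(u_j - u_k) in ℚ[u0,...,u4] when l_i is a polynomial in the u's satisfying l_j|_{u_j=u_k} = l_k|_{u_j=u_k}. Concretely, for l_i = S_{80} u_i^5 - S_{90} u_i^4 (with S_{m0} defined below), each T_{mn} is divisible by δ. -/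
open MvPolynomial

/-- Elementary symmetric polynomial (degree `m`) in the variables indexed by `s`. -/
noncomputable def esymP (s : Finset (Fin 5)) (m : ℕ) : MvPolynomial (Fin 5) ℚ :=
  ∑ t ∈ s.powersetCard m, ∏ j ∈ t, X j

/-- `d_i = ∏_{j>k, j,k≠i} (u_j - u_k)`. -/
noncomputable def dP (i : Fin 5) : MvPolynomial (Fin 5) ℚ :=
  ∏ p ∈ Finset.univ.filter
      (fun p : Fin 5 × Fin 5 => p.2 < p.1 ∧ p.1 ≠ i ∧ p.2 ≠ i), (X p.1 - X p.2)

/-- `n_i = e₂(i)² - e₁(i)e₃(i)`. -/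
noncomputable def nP (i : Fin 5) : MvPolynomial (Fin 5) ℚ :=
  (esymP {i}ᶜ 2)^2 - esymP {i}ᶜ 1 * esymP {i}ᶜ 3

/-- `M_i = (-1)^i d_i n_i`. -/
noncomputable def MP (i : Fin 5) : MvPolynomial (Fin 5) ℚ :=
  (-1)^(i : ℕ) * dP i * nP i

/-- The discriminant `δ = ∏_{j>k} (u_j - u_k)`. -/
noncomputable def deltaP : MvPolynomial (Fin 5) ℚ :=
  ∏ p ∈ Finset.univ.filter (fun p : Fin 5 × Fin 5 => p.2 < p.1), (X p.1 - X p.2)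


/-! Substituting `u_j := u_k` (with `k < j`) kills every `M_i` with `i ∉ {j, k}`, since `d_i` has
the factor `u_j - u_k`; it turns `M_j` into `-M_k` and makes `l_j = l_k`, so it kills `T_{mn}`.
Hence each `u_j - u_k` divides `T_{mn}`, and as these are pairwise non-associated primes of
`ℚ[u₀, …, u₄]`, so does their product `δ`. -/

section Substitution

variable {σ R : Type*} [CommRing R] [DecidableEq σ]

theorem X_sub_X_dvd_sub_rename_update (j k : σ) (p : MvPolynomial σ R) :
    X j - X k ∣ p - rename (Function.update id j k) p := by
  set I := Ideal.span {(X j - X k : MvPolynomial σ R)}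
  have hmk : (Ideal.Quotient.mkₐ R I).comp (rename (Function.update id j k)) =
      Ideal.Quotient.mkₐ R I := by
    refine algHom_ext fun i => ?_
    rcases eq_or_ne i j with rfl | hij
    · simpa [Ideal.Quotient.mkₐ_eq_mk] using
        (Ideal.Quotient.eq.mpr (Ideal.mem_span_singleton_self _)).symm
    · simp [Function.update_of_ne hij]
  rw [← Ideal.mem_span_singleton, ← Ideal.Quotient.eq, ← Ideal.Quotient.mkₐ_eq_mk R]
  exact (DFunLike.congr_fun hmk p).symm

theorem rename_update_eq_zero_iff {j k : σ} (hjk : j ≠ k) {p : MvPolynomial σ R} :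
    rename (Function.update id j k) p = 0 ↔ X j - X k ∣ p := by
  refine ⟨fun h => by simpa [h] using X_sub_X_dvd_sub_rename_update j k p, ?_⟩
  rintro ⟨q, rfl⟩
  simp [Function.update_of_ne hjk.symm]

theorem prime_X_sub_X [IsDomain R] {j k : σ} (hjk : j ≠ k) :
    Prime (X j - X k : MvPolynomial σ R) := by
  have hker : Ideal.span {X j - X k} = RingHom.ker (rename (R := R) (Function.update id j k)) := by
    ext p
    rw [Ideal.mem_span_singleton, RingHom.mem_ker, rename_update_eq_zero_iff hjk]
  rw [← Ideal.span_singleton_prime (sub_ne_zero.mpr ((X_injective (R := R)).ne hjk)), hker]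
  exact RingHom.ker_isPrime _

theorem isRelPrime_X_sub_X [IsDomain R] {a b c d : σ} (hab : a ≠ b) (hcd : c ≠ d)
    (h : s(a, b) ≠ s(c, d)) : IsRelPrime (X a - X b : MvPolynomial σ R) (X c - X d) := by
  rw [(prime_X_sub_X hab).irreducible.isRelPrime_iff_not_dvd, ← rename_update_eq_zero_iff hab,
    map_sub, rename_X, rename_X, sub_eq_zero, X_inj]
  simp only [Function.update_apply, id] at h ⊢
  split_ifs <;> grind

theorem update_id_comp_swap (j k : σ) :
    Function.update id j k ∘ Equiv.swap j k = Function.update id j k := by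
  funext i
  simp only [Function.comp_apply, Function.update_apply, id, Equiv.swap_apply_def]
  split_ifs <;> simp_all

end Substitution

theorem Finset.map_swap_compl_singleton {α : Type*} [Fintype α] [DecidableEq α] (j k : α) :
    ({j}ᶜ : Finset α).map (Equiv.swap j k).toEmbedding = {k}ᶜ := by
  ext i
  simp [Finset.mem_map_equiv, Equiv.swap_apply_eq_iff]

theorem map_sum_mul_eq_zero {ι A B : Type*} [Fintype ι] [Semiring A] [Ring B] (φ : A →+* B)
    (M h : ι → A) {j k : ι} (hjk : j ≠ k) (hM : ∀ i, i ≠ j → i ≠ k → φ (M i) = 0)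
    (hMjk : φ (M j) = -φ (M k)) (hh : φ (h j) = φ (h k)) : φ (∑ i, M i * h i) = 0 := by
  rw [map_sum, Fintype.sum_eq_add j k hjk fun i hi => by rw [map_mul, hM i hi.1 hi.2, zero_mul],
    map_mul, map_mul, hMjk, hh, neg_mul, neg_add_cancel]

section FiveVariables

variable {i j k : Fin 5}

theorem rename_esymP (e : Fin 5 ↪ Fin 5) (s : Finset (Fin 5)) (m : ℕ) :
    rename e (esymP s m) = esymP (s.map e) m := by
  simp [esymP, Finset.powersetCard_map, Finset.prod_map]

theorem rename_update_esymP_compl (j k : Fin 5) (m : ℕ) :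
    rename (Function.update id j k) (esymP {j}ᶜ m) =
      rename (Function.update id j k) (esymP {k}ᶜ m) := by
  rw [← Finset.map_swap_compl_singleton j k, ← rename_esymP, Equiv.coe_toEmbedding,
    rename_rename, update_id_comp_swap]

theorem rename_update_nP (j k : Fin 5) :
    rename (Function.update id j k) (nP j) = rename (Function.update id j k) (nP k) := by
  simp only [nP, map_sub, map_mul, map_pow, rename_update_esymP_compl j k]

theorem X_sub_X_dvd_dP (hkj : k < j) (hij : i ≠ j) (hik : i ≠ k) : X j - X k ∣ dP i :=
  Finset.dvd_prod_of_mem (fun p : Fin 5 × Fin 5 => X p.1 - X p.2) (a := (j, k))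
    (by simp [hkj, hij.symm, hik.symm])

/- The factors of `d_k` that involve `u_j` become, after `u_j := u_k`, the factors of `d_j` that
involve `u_k`, except that the `j - k - 1` factors `u_k - u_b` with `k < b < j` change sign. -/
theorem neg_one_pow_mul_rename_update_dP (hkj : k < j) :
    (-1) ^ (j : ℕ) * rename (Function.update id j k) (dP j) =
      -((-1) ^ (k : ℕ) * rename (Function.update id j k) (dP k)) := by
  fin_cases j <;> fin_cases k <;>
    simp [dP, Finset.prod_filter, Fintype.prod_prod_type, Fin.prod_univ_five] at hkj ⊢ <;> ring

theorem rename_update_MP_of_ne (hkj : k < j) (hij : i ≠ j) (hik : i ≠ k) :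
    rename (Function.update id j k) (MP i) = 0 :=
  (rename_update_eq_zero_iff hkj.ne').mpr
    ((dvd_mul_of_dvd_right (X_sub_X_dvd_dP hkj hij hik) _).mul_right _)

theorem rename_update_MP_self (hkj : k < j) :
    rename (Function.update id j k) (MP j) = -rename (Function.update id j k) (MP k) := by
  simp only [MP, map_mul, map_pow, map_neg, map_one, rename_update_nP j k]
  linear_combination rename (Function.update id j k) (nP k) * neg_one_pow_mul_rename_update_dP hkj

end FiveVariables

theorem delta_dvd_Tmn_general (S80 S90 : MvPolynomial (Fin 5) ℚ) (m n : ℕ) :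
    deltaP ∣ ∑ i, MP i * (X i)^m * (S80 * (X i)^5 - S90 * (X i)^4)^n := by
  refine Finset.prod_dvd_of_isRelPrime ?_ fun p hp => ?_
  · rintro ⟨a, b⟩ hab ⟨c, d⟩ hcd hne
    simp only [Finset.coe_filter, Finset.mem_univ, true_and, Set.mem_ofPred_eq] at hab hcd
    refine isRelPrime_X_sub_X hab.ne' hcd.ne' ?_
    rw [Ne, Sym2.eq_iff]
    grind
  · have hkj : p.2 < p.1 := (Finset.mem_filter.mp hp).2
    rw [← rename_update_eq_zero_iff hkj.ne']
    simp_rw [mul_assoc]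
    refine map_sum_mul_eq_zero _ _ _ hkj.ne' (fun i => rename_update_MP_of_ne hkj)
      (rename_update_MP_self hkj) ?_
    simp [Function.update_of_ne hkj.ne]

/-- With `l_i = S₈₀ u_i⁵ - S₉₀ u_i⁴` (where `δ·S₈₀ = Σ M_i u_i⁸`, `δ·S₉₀ = Σ M_i u_i⁹`),
each sum `T_{mn} = Σ_i M_i u_i^m l_i^n` is divisible by the discriminant `δ` in
`ℚ[u₀,…,u₄]`. -/
theorem delta_dvd_Tmn (S80 S90 : MvPolynomial (Fin 5) ℚ)
    (hS80 : deltaP * S80 = ∑ i, MP i * (X i)^8)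
    (hS90 : deltaP * S90 = ∑ i, MP i * (X i)^9) (m n : ℕ) :
    deltaP ∣ ∑ i, MP i * (X i)^m * (S80 * (X i)^5 - S90 * (X i)^4)^n :=
  delta_dvd_Tmn_general S80 S90 m n
end

section
/- Let Δ(V) = (Σ_i M_i u_i v_i)^2 - (Σ_i M_i u_i^2)(Σ_i M_i v_i^2) with M_i = M_i(U) satisfying Σ M_i = Σ M_i u_i = 0. Then Δ(V) = -Σ_{i>j} M_i M_j (u_i v_j - u_j v_i)^2, and consequently Δ vanishes at V = (1,1,1,1,1) and at V = (u_0,...,u_4). -/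
/-- Let `M, u : Fin 5 → R` with `Σ M_i = 0` and `Σ M_i u_i = 0`, and set
`Δ(V) = (Σ M_i u_i v_i)² - (Σ M_i u_i²)(Σ M_i v_i²)`.  Then the Lagrange-type identity
`Δ(V) = -Σ_{j<i} M_i M_j (u_i v_j - u_j v_i)²` holds, and `Δ` vanishes at
`V = (1,…,1)` and at `V = u`. -/
theorem discriminant_lagrange_identity {R : Type*} [CommRing R]
    (M u : Fin 5 → R) (hM0 : ∑ i, M i = 0) (hM1 : ∑ i, M i * u i = 0) :
    (∀ v : Fin 5 → R,
      (∑ i, M i * u i * v i)^2 - (∑ i, M i * (u i)^2) * (∑ i, M i * (v i)^2) =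
        -∑ p ∈ Finset.univ.filter (fun p : Fin 5 × Fin 5 => p.2 < p.1),
            M p.1 * M p.2 * (u p.1 * v p.2 - u p.2 * v p.1)^2) ∧
    ((∑ i, M i * u i * (1:R))^2 - (∑ i, M i * (u i)^2) * (∑ i, M i * (1:R)^2) = 0) ∧
    ((∑ i, M i * u i * u i)^2 - (∑ i, M i * (u i)^2) * (∑ i, M i * (u i)^2) = 0) := by
  refine ⟨?_, ?_, ?_⟩
  · intro v
    rw [show (Finset.univ.filter (fun p : Fin 5 × Fin 5 => p.2 < p.1)) =
      {((1:Fin 5),(0:Fin 5)), (2,0), (2,1), (3,0), (3,1), (3,2), (4,0), (4,1), (4,2), (4,3)}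
      from by decide]
    simp [Fin.sum_univ_five, Finset.sum_insert, Finset.mem_insert]
    ring
  · have h1 : (∑ i, M i * u i * (1:R)) = ∑ i, M i * u i := by simp
    have h2 : (∑ i, M i * ((1:R))^2) = ∑ i, M i := by simp
    rw [h1, h2, hM0, hM1]; ring
  · have h3 : (∑ i, M i * u i * u i) = ∑ i, M i * (u i)^2 := by
      apply Finset.sum_congr rfl; intros; ring
    rw [h3]; ring
end

section
/- Let a, b, c ∈ ℂ with a^5 + b^5 + c^5 = 0, bc ≠ 0. Set P = (a,b,c,1,-1), Q = (a,b,c,-1,1), S = (0,-b,0,0,b^5), T = (0,0,-c,c^5,0). Then P, Q ∈ X (the Fermat quintic), the line PQ is bitangent to X at P and Q (i.e. Σ_i q_i p_i^4 = 0 and Σ_i q_i^4 p_i = 0), and all four points P, Q, S, T lie in the hyperplane a^4 x_0 + b^4 x_1 + c^4 x_2 + x_3 + x_4 = 0 (the common tangent hyperplane to X at P and Q). -/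
/-- For `a⁵ + b⁵ + c⁵ = 0` and `b, c ≠ 0`, the points `P = (a,b,c,1,-1)` and
`Q = (a,b,c,-1,1)` lie on the Fermat quintic, the line `PQ` is bitangent to it at `P`
and `Q`, and the four points `P, Q, S = (0,-b,0,0,b⁵), T = (0,0,-c,c⁵,0)` all lie in the
common tangent hyperplane `a⁴x₀ + b⁴x₁ + c⁴x₂ + x₃ + x₄ = 0`. -/
theorem exceptional_locus_configuration (a b c : ℂ)
    (habc : a^5 + b^5 + c^5 = 0) (hb : b ≠ 0) (hc : c ≠ 0) :
    -- (1) P, Q ∈ X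
    (a^5 + b^5 + c^5 + 1^5 + (-1:ℂ)^5 = 0) ∧
    (a^5 + b^5 + c^5 + (-1:ℂ)^5 + 1^5 = 0) ∧
    -- (2) bitangency: Σ qᵢ pᵢ⁴ = 0 and Σ qᵢ⁴ pᵢ = 0
    (a*a^4 + b*b^4 + c*c^4 + (-1)*1^4 + 1*(-1:ℂ)^4 = 0) ∧
    (a^4*a + b^4*b + c^4*c + (-1:ℂ)^4*1 + 1^4*(-1) = 0) ∧
    -- (3) P, Q, S, T lie in the tangent hyperplane
    (a^4*a + b^4*b + c^4*c + 1 + (-1) = 0) ∧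
    (a^4*a + b^4*b + c^4*c + (-1) + 1 = 0) ∧
    (a^4*0 + b^4*(-b) + c^4*0 + 0 + b^5 = 0) ∧
    (a^4*0 + b^4*0 + c^4*(-c) + c^5 + 0 = 0) := by
  refine ⟨by linear_combination habc, by linear_combination habc,
    by linear_combination habc, by linear_combination habc,
    by linear_combination habc, by linear_combination habc,
    by ring, by ring⟩
end
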